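/- arXiv:1406.7443 — 3 statements merged into one kernel-verified Lean document; each statement's English description precedes it below -/
import Mathlib

section
/- Fix d, n, K ∈ ℕ with K ≥ 1 and λ, σ > 0. For each episode t = 1,…,n let φ_{t,1},…,φ_{t,m_t} ∈ ℝ^d be feature vectors with m_t ≤ K and ‖φ_{t,k}‖₂ ≤ 1 for all k, and define the positive definite matrices Σ_t ∈ ℝ^{d×d} by Σ_t^{-1} = (1/λ²) I + (1/σ²) Σ_{τ=1}^{t-1} Σ_{k=1}^{m_τ} φ_{τ,k} φ_{τ,k}ᵀ. Then Σ_{t=1}^n Σ_{k=1}^{m_t} φ_{t,k}ᵀ Σ_t φ_{t,k} ≤ d K λ² · ln(1 + nKλ²/(dσ²)) / ln(1 + λ²/σ²). -/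
/-!
Elliptical-potential argument. Since `Σ_t⁻¹ ≥ λ⁻² I` and `‖φ‖ ≤ 1`, every width
`s = φᵀ Σ_t φ` is at most `λ²`, so concavity of `log` gives
`s ≤ λ² log (1 + s / σ²) / log (1 + λ² / σ²)`. By the matrix determinant lemma and monotonicity
of `det` under positive semidefinite perturbations, `log (1 + s / σ²)` is at most the increase of
`log det Σ⁻¹` during episode `t`; with at most `K` features per episode the sum telescopes to
`K (log det Σ_{n+1}⁻¹ - log det Σ_1⁻¹)`. Finally AM–GM on the eigenvalues bounds `log det` by
`d log (trace / d)`, and the trace of `Σ_{n+1}⁻¹` is at most `d / λ² + n K / σ²`.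
-/

open Matrix Finset

namespace Matrix

variable {ι : Type*} [Fintype ι]

theorem posSemidef_vecMulVec_self (v : ι → ℝ) : (vecMulVec v v).PosSemidef := by
  simpa using posSemidef_vecMulVec_self_star v

variable [DecidableEq ι]

theorem det_add_vecMulVec {R : Type*} [CommRing R] {A : Matrix ι ι R} (hA : IsUnit A.det)
    (u v : ι → R) : (A + vecMulVec u v).det = A.det * (1 + v ⬝ᵥ A⁻¹ *ᵥ u) := by
  rw [vecMulVec_eq Unit, det_add_replicateCol_mul_replicateRow hA, ← replicateRow_vecMul,
    replicateRow_mul_replicateCol, det_unique (n := Unit), dotProduct_mulVec]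
  simp

namespace PosDef

variable {A : Matrix ι ι ℝ}

theorem dotProduct_inv_mulVec_nonneg (hA : A.PosDef) (v : ι → ℝ) : 0 ≤ v ⬝ᵥ A⁻¹ *ᵥ v := by
  simpa using hA.inv.posSemidef.dotProduct_mulVec_nonneg v

theorem det_le_det_add_vecMulVec (hA : A.PosDef) (v : ι → ℝ) :
    A.det ≤ (A + vecMulVec v v).det := by
  rw [det_add_vecMulVec hA.det_pos.ne'.isUnit]
  exact le_mul_of_one_le_right hA.det_pos.le
    (le_add_of_nonneg_right (hA.dotProduct_inv_mulVec_nonneg v))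

/-- Writing `B` as a sum of rank-one matrices, each one only increases the determinant. -/
theorem det_le_det_add {B : Matrix ι ι ℝ} (hA : A.PosDef) (hB : B.PosSemidef) :
    A.det ≤ (A + B).det := by
  obtain ⟨r, v, rfl⟩ := posSemidef_iff_eq_sum_vecMulVec.mp hB
  simp only [star_trivial]
  induction (univ : Finset (Fin r)) using Finset.induction_on with
  | empty => simp
  | insert i s hi ih =>
    rw [sum_insert hi, add_comm (vecMulVec _ _), ← add_assoc]
    have hpos : (A + ∑ j ∈ s, vecMulVec (v j) (v j)).PosDef :=
      hA.add_posSemidef (posSemidef_sum s fun j _ => posSemidef_vecMulVec_self (v j))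
    exact ih.trans (hpos.det_le_det_add_vecMulVec (v i))

theorem det_mul_one_add_mul_le_det_add {B : Matrix ι ι ℝ} {c : ℝ} (hA : A.PosDef) (hc : 0 ≤ c)
    (v : ι → ℝ) (hB : (B - c • vecMulVec v v).PosSemidef) :
    A.det * (1 + c * (v ⬝ᵥ A⁻¹ *ᵥ v)) ≤ (A + B).det := by
  have hpos : (A + c • vecMulVec v v).PosDef :=
    hA.add_posSemidef ((posSemidef_vecMulVec_self v).smul hc)
  calc A.det * (1 + c * (v ⬝ᵥ A⁻¹ *ᵥ v)) = (A + c • vecMulVec v v).det := by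
        rw [← smul_vecMulVec, det_add_vecMulVec hA.det_pos.ne'.isUnit, mulVec_smul,
          dotProduct_smul, smul_eq_mul]
    _ ≤ (A + c • vecMulVec v v + (B - c • vecMulVec v v)).det := hpos.det_le_det_add hB
    _ = (A + B).det := by rw [add_add_sub_cancel]

theorem dotProduct_inv_mulVec_le {c : ℝ} (hA : A.PosDef) (hc : 0 < c)
    (hAc : (A - c⁻¹ • 1).PosSemidef) (v : ι → ℝ) : v ⬝ᵥ A⁻¹ *ᵥ v ≤ c * (v ⬝ᵥ v) := by
  set ψ := A⁻¹ *ᵥ v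
  have hAψ : A *ᵥ ψ = v := by
    rw [mulVec_mulVec, mul_nonsing_inv _ hA.det_pos.ne'.isUnit, one_mulVec]
  have hψψ : ψ ⬝ᵥ ψ ≤ c * (v ⬝ᵥ ψ) := by
    have h := hAc.dotProduct_mulVec_nonneg ψ
    simp only [star_trivial, sub_mulVec, smul_mulVec, one_mulVec, dotProduct_sub,
      dotProduct_smul, smul_eq_mul, hAψ, dotProduct_comm ψ v, sub_nonneg] at h
    rwa [inv_mul_le_iff₀ hc] at h
  -- expanding `|ψ - c v|² ≥ 0` and using `hψψ` gives `v ⬝ᵥ ψ ≤ c |v|²`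
  have hsq : 0 ≤ (ψ - c • v) ⬝ᵥ (ψ - c • v) := by
    simpa using dotProduct_star_self_nonneg (ψ - c • v)
  simp only [sub_dotProduct, dotProduct_sub, smul_dotProduct, dotProduct_smul, smul_eq_mul,
    dotProduct_comm ψ v] at hsq
  nlinarith

theorem log_det_le_card_mul_log_trace_div (hA : A.PosDef) (hι : 0 < Fintype.card ι) :
    Real.log A.det ≤ Fintype.card ι * Real.log (A.trace / Fintype.card ι) := by
  set N : ℝ := (Fintype.card ι : ℝ)
  have hN : 0 < N := Nat.cast_pos.mpr hι
  have hμ := hA.eigenvalues_pos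
  rw [hA.isHermitian.det_eq_prod_eigenvalues, hA.isHermitian.trace_eq_sum_eigenvalues]
  simp only [RCLike.ofReal_real_eq_id, id]
  rw [Real.log_prod fun i _ => (hμ i).ne']
  have hjensen := strictConcaveOn_log_Ioi.concaveOn.le_map_sum (t := univ)
    (w := fun _ => N⁻¹) (p := hA.isHermitian.eigenvalues) (fun _ _ => (inv_pos.mpr hN).le)
    (by simp [N, hN.ne']) (fun i _ => hμ i)
  simp only [smul_eq_mul, ← mul_sum] at hjensen
  rwa [inv_mul_eq_div, inv_mul_eq_div, div_le_iff₀' hN] at hjensen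

end PosDef

end Matrix

theorem Real.mul_log_one_add_div_le {s a b : ℝ} (hs : 0 ≤ s) (hsa : s ≤ a) (hb : 0 < b) :
    s * Real.log (1 + a / b) ≤ a * Real.log (1 + s / b) := by
  rcases hsa.eq_or_lt with rfl | hsa
  · rfl
  have ha : 0 < a := hs.trans_lt hsa
  have h := strictConcaveOn_log_Ioi.concaveOn.2 (x := 1 + a / b) (y := 1)
    (by simp only [Set.mem_Ioi]; positivity) (by norm_num) (div_nonneg hs ha.le)
    (sub_nonneg.mpr ((div_le_one ha).mpr hsa.le)) (add_sub_cancel _ _)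
  have harg : (s / a) • (1 + a / b) + (1 - s / a) • (1 : ℝ) = 1 + s / b := by
    simp only [smul_eq_mul]; field_simp; ring
  rw [harg, Real.log_one, smul_zero, add_zero, smul_eq_mul, div_mul_eq_mul_div,
    div_le_iff₀ ha] at h
  linarith

section DesignMatrix

variable {d n : ℕ} {m : Fin n → ℕ} (φ : (t : Fin n) → Fin (m t) → Fin d → ℝ) (lam σ : ℝ)

/-- The matrix `Σ_t⁻¹` of the statement, indexed by `t : ℕ` so that the matrix after the last
episode, `designMatrix φ lam σ n`, is available. -/
noncomputable def designMatrix (t : ℕ) : Matrix (Fin d) (Fin d) ℝ :=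
  (lam ^ 2)⁻¹ • 1 + (σ ^ 2)⁻¹ • ∑ τ : Fin n with τ.val < t, ∑ k, vecMulVec (φ τ k) (φ τ k)

theorem designMatrix_sub_posSemidef (t : ℕ) :
    (designMatrix φ lam σ t - (lam ^ 2)⁻¹ • 1).PosSemidef := by
  rw [designMatrix, add_sub_cancel_left]
  exact (posSemidef_sum _ fun τ _ => posSemidef_sum _ fun k _ => posSemidef_vecMulVec_self _).smul
    (by positivity)

variable {lam} in
theorem designMatrix_posDef (hlam : lam ≠ 0) (t : ℕ) : (designMatrix φ lam σ t).PosDef := by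
  have hc : 0 < (lam ^ 2)⁻¹ := by positivity
  simpa using (PosDef.one.smul hc).add_posSemidef (designMatrix_sub_posSemidef φ lam σ t)

variable {lam} in
theorem dotProduct_inv_designMatrix_mulVec_le (hlam : lam ≠ 0) (t : ℕ) (v : Fin d → ℝ) :
    v ⬝ᵥ (designMatrix φ lam σ t)⁻¹ *ᵥ v ≤ lam ^ 2 * (v ⬝ᵥ v) :=
  (designMatrix_posDef φ σ hlam t).dotProduct_inv_mulVec_le (by positivity)
    (designMatrix_sub_posSemidef φ lam σ t) v

theorem designMatrix_zero : designMatrix φ lam σ 0 = (lam ^ 2)⁻¹ • 1 := by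
  simp [designMatrix]

theorem designMatrix_succ (t : Fin n) :
    designMatrix φ lam σ (t + 1) =
      designMatrix φ lam σ t + (σ ^ 2)⁻¹ • ∑ k, vecMulVec (φ t k) (φ t k) := by
  have hfilter : univ.filter (fun τ : Fin n => τ.val < t + 1) =
      insert t (univ.filter fun τ : Fin n => τ.val < t) := by
    ext τ
    simp only [mem_filter, mem_univ, true_and, mem_insert, Fin.ext_iff]
    omega
  rw [designMatrix, designMatrix, hfilter, sum_insert (by simp), smul_add]
  abel

theorem trace_designMatrix_le {K : ℕ} (hm : ∀ t, m t ≤ K) (hφ : ∀ t k, φ t k ⬝ᵥ φ t k ≤ 1) :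
    (designMatrix φ lam σ n).trace ≤ d * (lam ^ 2)⁻¹ + (σ ^ 2)⁻¹ * (n * K) := by
  have hall : univ.filter (fun τ : Fin n => τ.val < n) = univ :=
    filter_true_of_mem fun τ _ => τ.isLt
  rw [designMatrix, hall, trace_add, trace_smul, trace_smul, trace_one, Fintype.card_fin,
    smul_eq_mul, smul_eq_mul, mul_comm _ (d : ℝ)]
  gcongr
  calc (∑ τ, ∑ k, vecMulVec (φ τ k) (φ τ k)).trace = ∑ τ, ∑ k, φ τ k ⬝ᵥ φ τ k := by
        simp only [trace_sum, trace_vecMulVec]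
    _ ≤ ∑ τ, ∑ _k : Fin (m τ), (1 : ℝ) := by gcongr with τ _ k; exact hφ τ k
    _ ≤ ∑ _τ : Fin n, (K : ℝ) := by gcongr with τ; simpa using hm τ
    _ = n * K := by simp

variable {lam} in
theorem log_one_add_div_le_log_det_succ_sub (hlam : lam ≠ 0) (t : Fin n) (k : Fin (m t)) :
    Real.log (1 + φ t k ⬝ᵥ (designMatrix φ lam σ t)⁻¹ *ᵥ φ t k / σ ^ 2) ≤
      Real.log (designMatrix φ lam σ (t + 1)).det - Real.log (designMatrix φ lam σ t).det := by
  have hA := designMatrix_posDef φ σ hlam t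
  have hrest : ((σ ^ 2)⁻¹ • ∑ j, vecMulVec (φ t j) (φ t j) -
      (σ ^ 2)⁻¹ • vecMulVec (φ t k) (φ t k)).PosSemidef := by
    rw [← smul_sub, ← add_sum_erase _ _ (mem_univ k), add_sub_cancel_left]
    exact (posSemidef_sum _ fun j _ => posSemidef_vecMulVec_self _).smul (by positivity)
  have hdet := hA.det_mul_one_add_mul_le_det_add (by positivity) (φ t k) hrest
  rw [← designMatrix_succ, inv_mul_eq_div] at hdet
  have hq : 0 ≤ φ t k ⬝ᵥ (designMatrix φ lam σ t)⁻¹ *ᵥ φ t k / σ ^ 2 :=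
    div_nonneg (hA.dotProduct_inv_mulVec_nonneg _) (by positivity)
  have hlog := Real.log_le_log (mul_pos hA.det_pos (by positivity)) hdet
  rw [Real.log_mul hA.det_pos.ne' (by positivity)] at hlog
  linarith

variable {lam} in
theorem sum_log_one_add_div_le {K : ℕ} (hm : ∀ t, m t ≤ K) (hlam : lam ≠ 0) :
    ∑ t, ∑ k, Real.log (1 + φ t k ⬝ᵥ (designMatrix φ lam σ t)⁻¹ *ᵥ φ t k / σ ^ 2) ≤
      K * (Real.log (designMatrix φ lam σ n).det - Real.log (designMatrix φ lam σ 0).det) := by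
  set Δ : ℕ → ℝ := fun t =>
    Real.log (designMatrix φ lam σ (t + 1)).det - Real.log (designMatrix φ lam σ t).det
  have hΔ (t : Fin n) : 0 ≤ Δ t := by
    have hA := designMatrix_posDef φ σ hlam t
    rw [sub_nonneg, designMatrix_succ]
    exact Real.log_le_log hA.det_pos (hA.det_le_det_add
      ((posSemidef_sum _ fun k _ => posSemidef_vecMulVec_self _).smul (by positivity)))
  calc ∑ t, ∑ k, Real.log (1 + φ t k ⬝ᵥ (designMatrix φ lam σ t)⁻¹ *ᵥ φ t k / σ ^ 2)
      ≤ ∑ t : Fin n, K * Δ t := by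
        gcongr with t
        calc _ ≤ ∑ _k : Fin (m t), Δ t :=
              sum_le_sum fun k _ => log_one_add_div_le_log_det_succ_sub φ σ hlam t k
          _ = m t * Δ t := by simp
          _ ≤ K * Δ t := by gcongr; exacts [hΔ t, hm t]
    _ = K * (Real.log (designMatrix φ lam σ n).det - Real.log (designMatrix φ lam σ 0).det) := by
        rw [← mul_sum, Fin.sum_univ_eq_sum_range Δ,
          sum_range_sub fun t => Real.log (designMatrix φ lam σ t).det]

variable {lam} in
theorem log_det_designMatrix_sub_le (hd : 0 < d) {K : ℕ} (hm : ∀ t, m t ≤ K)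
    (hφ : ∀ t k, φ t k ⬝ᵥ φ t k ≤ 1) (hlam : lam ≠ 0) :
    Real.log (designMatrix φ lam σ n).det - Real.log (designMatrix φ lam σ 0).det ≤
      d * Real.log (1 + n * K * lam ^ 2 / (d * σ ^ 2)) := by
  have := Fin.pos_iff_nonempty.mp hd
  have hc : 0 < (lam ^ 2)⁻¹ := by positivity
  have hA := designMatrix_posDef φ σ hlam n
  have htrace : (designMatrix φ lam σ n).trace / d ≤
      (lam ^ 2)⁻¹ * (1 + n * K * lam ^ 2 / (d * σ ^ 2)) := by
    rw [div_le_iff₀ (by positivity)]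
    calc _ ≤ d * (lam ^ 2)⁻¹ + (σ ^ 2)⁻¹ * (n * K) := trace_designMatrix_le φ lam σ hm hφ
      _ = _ := by field_simp
  have hlog := Real.log_le_log (div_pos hA.trace_pos (by positivity)) htrace
  rw [Real.log_mul hc.ne' (by positivity)] at hlog
  have hdet := hA.log_det_le_card_mul_log_trace_div (by simpa using hd)
  rw [Fintype.card_fin] at hdet
  rw [designMatrix_zero, det_smul, det_one, mul_one, Fintype.card_fin, Real.log_pow]
  linarith [mul_le_mul_of_nonneg_left hlog (Nat.cast_nonneg d)]

end DesignMatrix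

theorem stmt_7_general {d n K : ℕ} (hd : 0 < d) (lam σ : ℝ)
    (hlam : 0 < lam) (hσ : 0 < σ)
    (m : Fin n → ℕ) (hm : ∀ t, m t ≤ K)
    (φ : (t : Fin n) → Fin (m t) → Fin d → ℝ)
    (hφ : ∀ t k, Real.sqrt (φ t k ⬝ᵥ φ t k) ≤ 1)
    (Sig : Fin n → Matrix (Fin d) (Fin d) ℝ)
    (hSig : ∀ t, Sig t =
      ((lam ^ 2)⁻¹ • (1 : Matrix (Fin d) (Fin d) ℝ) +
        (σ ^ 2)⁻¹ • ∑ τ ∈ Finset.Iio t, ∑ k, vecMulVec (φ τ k) (φ τ k))⁻¹) :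
    ∑ t, ∑ k, φ t k ⬝ᵥ (Sig t).mulVec (φ t k) ≤
      d * K * lam ^ 2 * Real.log (1 + n * K * lam ^ 2 / (d * σ ^ 2)) /
        Real.log (1 + lam ^ 2 / σ ^ 2) := by
  have hφ' (t k) : φ t k ⬝ᵥ φ t k ≤ 1 := Real.sqrt_le_one.mp (hφ t k)
  have hSig' (t : Fin n) : Sig t = (designMatrix φ lam σ t)⁻¹ := by
    rw [hSig t, designMatrix]
    congr 4
    ext τ
    simp
  set L := Real.log (1 + lam ^ 2 / σ ^ 2)
  have hL : 0 < L := Real.log_pos (lt_add_of_pos_right _ (by positivity))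
  have hwidth (t : Fin n) (k : Fin (m t)) : φ t k ⬝ᵥ (Sig t) *ᵥ φ t k ≤
      lam ^ 2 / L * Real.log (1 + φ t k ⬝ᵥ (designMatrix φ lam σ t)⁻¹ *ᵥ φ t k / σ ^ 2) := by
    have hA := designMatrix_posDef φ σ hlam.ne' t
    rw [hSig', div_mul_eq_mul_div, le_div_iff₀ hL]
    exact Real.mul_log_one_add_div_le (hA.dotProduct_inv_mulVec_nonneg _)
      ((dotProduct_inv_designMatrix_mulVec_le φ σ hlam.ne' t _).trans
        (mul_le_of_le_one_right (by positivity) (hφ' t k))) (by positivity)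
  calc _ ≤ ∑ t, ∑ k, lam ^ 2 / L *
          Real.log (1 + φ t k ⬝ᵥ (designMatrix φ lam σ t)⁻¹ *ᵥ φ t k / σ ^ 2) :=
        sum_le_sum fun t _ => sum_le_sum fun k _ => hwidth t k
    _ = lam ^ 2 / L *
          ∑ t, ∑ k, Real.log (1 + φ t k ⬝ᵥ (designMatrix φ lam σ t)⁻¹ *ᵥ φ t k / σ ^ 2) := by
        simp only [mul_sum]
    _ ≤ lam ^ 2 / L * (K * (d * Real.log (1 + n * K * lam ^ 2 / (d * σ ^ 2)))) := by
        gcongr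
        exact (sum_log_one_add_div_le φ σ hm hlam.ne').trans
          (by gcongr; exact log_det_designMatrix_sub_le φ σ hd hm hφ' hlam.ne')
    _ = _ := by ring

/-- worst-case bound on the sum of squared confidence widths. With
Σ_t⁻¹ = (1/λ²) I + (1/σ²) Σ_{τ<t} Σ_k φ_{τ,k} φ_{τ,k}ᵀ, m_t ≤ K, ‖φ_{t,k}‖₂ ≤ 1:
Σ_{t=1}^n Σ_{k=1}^{m_t} φ_{t,k}ᵀ Σ_t φ_{t,k}
  ≤ d K λ² ln(1 + nKλ²/(dσ²)) / ln(1 + λ²/σ²). -/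
theorem stmt_7 {d n K : ℕ} (hd : 0 < d) (hK : 1 ≤ K) (lam σ : ℝ)
    (hlam : 0 < lam) (hσ : 0 < σ)
    (m : Fin n → ℕ) (hm : ∀ t, m t ≤ K)
    (φ : (t : Fin n) → Fin (m t) → Fin d → ℝ)
    (hφ : ∀ t k, Real.sqrt (φ t k ⬝ᵥ φ t k) ≤ 1)
    (Sig : Fin n → Matrix (Fin d) (Fin d) ℝ)
    (hSig : ∀ t, Sig t =
      ((lam ^ 2)⁻¹ • (1 : Matrix (Fin d) (Fin d) ℝ) +
        (σ ^ 2)⁻¹ • ∑ τ ∈ Finset.Iio t, ∑ k, vecMulVec (φ τ k) (φ τ k))⁻¹) :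
    ∑ t, ∑ k, φ t k ⬝ᵥ (Sig t).mulVec (φ t k) ≤
      d * K * lam ^ 2 * Real.log (1 + n * K * lam ^ 2 / (d * σ ^ 2)) /
        Real.log (1 + lam ^ 2 / σ ^ 2) :=
  stmt_7_general hd lam σ hlam hσ m hm φ hφ Sig hSig
end

section
/- Let λ > 0, let θ̄ ∈ ℝ^d, let Σ ∈ ℝ^{d×d} be symmetric positive definite with Σ ⪯ λ² I (i.e., λ² I − Σ is positive semidefinite), and let θ be a random vector with the multivariate Gaussian distribution N(θ̄, Σ). Let φ₁, …, φ_L ∈ ℝ^d satisfy ‖φ_e‖₂ ≤ 1 for every e, and let c > 0. Then E[ Σ_{e=1}^L max( ⟨φ_e, θ − θ̄⟩ − c √(φ_eᵀ Σ φ_e), 0 ) ] ≤ (λ L / √(2π)) · exp(−c²/2). -/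
/-!
Each summand depends on `θ` only through `⟨φ_e, θ⟩ ~ N(⟨φ_e, θ̄⟩, σ²)` with
`σ² = φ_eᵀ Σ φ_e ≤ λ²`. For `Z ~ N(0, σ²)` with density `p` and `a ≥ 0`,
`E[(Z - a)⁺] ≤ E[Z 1{Z > a}] = σ² p(a)`, because `(σ² p)' = -z p`; at `a = cσ` this is
`σ e^{-c²/2} / √(2π)`.
-/

open MeasureTheory ProbabilityTheory Matrix Finset

/-- `ν` is the multivariate Gaussian distribution on ℝ^d with mean `m` and covariance
matrix `S`, characterized (Cramér–Wold) through its one-dimensional projections: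
for every a ∈ ℝ^d, ⟨a, x⟩ has the Gaussian distribution N(⟨a, m⟩, aᵀ S a). -/
def IsGaussianVec {d : ℕ} (ν : Measure (Fin d → ℝ)) (m : Fin d → ℝ)
    (S : Matrix (Fin d) (Fin d) ℝ) : Prop :=
  ∀ a : Fin d → ℝ, ν.map (fun x => a ⬝ᵥ x) =
    gaussianReal (a ⬝ᵥ m) (Real.toNNReal (a ⬝ᵥ S.mulVec a))

open Real Filter Set Topology
open scoped NNReal

namespace ProbabilityTheory

lemma gaussianPDFReal_zero_eq (v : ℝ≥0) (x : ℝ) :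
    gaussianPDFReal 0 v x = (√(2 * π * v))⁻¹ * rexp (-(2 * (v : ℝ))⁻¹ * x ^ 2) := by
  rw [gaussianPDFReal, sub_zero]; ring_nf

lemma hasDerivAt_neg_mul_gaussianPDFReal_zero (v : ℝ≥0) (x : ℝ) :
    HasDerivAt (fun y ↦ -(v * gaussianPDFReal 0 v y)) (x * gaussianPDFReal 0 v x) x := by
  rcases eq_or_ne v 0 with rfl | hv
  · simpa using hasDerivAt_const x (0 : ℝ)
  have hv' : (v : ℝ) ≠ 0 := by exact_mod_cast hv
  simp_rw [gaussianPDFReal_zero_eq]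
  have := (((hasDerivAt_pow 2 x).const_mul (-(2 * (v : ℝ))⁻¹)).exp.const_mul
    ((√(2 * π * v))⁻¹)).const_mul (v : ℝ) |>.neg
  refine this.congr_deriv ?_
  field_simp
  ring

lemma integrable_mul_gaussianPDFReal_zero (v : ℝ≥0) :
    Integrable fun x ↦ x * gaussianPDFReal 0 v x := by
  rcases eq_or_ne v 0 with rfl | hv
  · simp
  have hb : 0 < (2 * (v : ℝ))⁻¹ := by positivity
  simp_rw [gaussianPDFReal_zero_eq, mul_left_comm _ (√(2 * π * v))⁻¹]
  exact (integrable_mul_exp_neg_mul_sq hb).const_mul _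

lemma tendsto_mul_gaussianPDFReal_zero_atTop (v : ℝ≥0) :
    Tendsto (fun x ↦ v * gaussianPDFReal 0 v x) atTop (𝓝 0) := by
  rcases eq_or_ne v 0 with rfl | hv
  · simp
  have hb : 0 < (2 * (v : ℝ))⁻¹ := by positivity
  have hsq : Tendsto (fun x : ℝ ↦ -(2 * (v : ℝ))⁻¹ * x ^ 2) atTop atBot :=
    tendsto_neg_atTop_atBot.comp ((tendsto_pow_atTop two_ne_zero).const_mul_atTop hb) |>.congr
      fun x ↦ by simp
  simp_rw [gaussianPDFReal_zero_eq]
  simpa using ((tendsto_exp_atBot.comp hsq).const_mul ((√(2 * π * v))⁻¹)).const_mul (v : ℝ)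

lemma integral_Ioi_mul_gaussianPDFReal_zero (v : ℝ≥0) (a : ℝ) :
    ∫ x in Ioi a, x * gaussianPDFReal 0 v x = v * gaussianPDFReal 0 v a := by
  rw [integral_Ioi_of_hasDerivAt_of_tendsto'
    (fun x _ ↦ hasDerivAt_neg_mul_gaussianPDFReal_zero v x)
    (integrable_mul_gaussianPDFReal_zero v).integrableOn
    (tendsto_mul_gaussianPDFReal_zero_atTop v).neg]
  simp

lemma mul_gaussianPDFReal_zero_mul_sqrt (v : ℝ≥0) (c : ℝ) :
    v * gaussianPDFReal 0 v (c * √v) = √v / √(2 * π) * rexp (-c ^ 2 / 2) := by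
  rcases eq_or_ne v 0 with rfl | hv
  · simp
  have hv' : (0 : ℝ) < v := by positivity
  rw [gaussianPDFReal, sub_zero, mul_pow, sq_sqrt hv'.le, sqrt_mul (by positivity),
    neg_div, mul_div_mul_right _ _ hv'.ne', ← neg_div]
  field_simp
  rw [sq_sqrt hv'.le]

lemma integral_max_sub_gaussianReal_zero_le (v : ℝ≥0) {a : ℝ} (ha : 0 ≤ a) :
    ∫ y, max (y - a) 0 ∂gaussianReal 0 v ≤ v * gaussianPDFReal 0 v a := by
  rcases eq_or_ne v 0 with rfl | hv
  · simp [gaussianReal_zero_var, ha]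
  rw [integral_gaussianReal_eq_integral_smul hv, ← integral_Ioi_mul_gaussianPDFReal_zero,
    ← integral_indicator measurableSet_Ioi]
  refine integral_mono_of_nonneg (ae_of_all _ fun y ↦ ?_)
    ((integrable_mul_gaussianPDFReal_zero v).indicator measurableSet_Ioi) (ae_of_all _ fun y ↦ ?_)
  · exact smul_nonneg (gaussianPDFReal_nonneg _ _ _) (le_max_right _ _)
  · dsimp only
    rcases le_or_gt y a with hy | hy
    · simp [hy]
    · rw [indicator_of_mem (Set.mem_Ioi.mpr hy), max_eq_left (sub_nonneg.mpr hy.le), smul_eq_mul,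
        mul_comm]
      exact mul_le_mul_of_nonneg_right (by linarith) (gaussianPDFReal_nonneg _ _ _)

lemma integral_max_sub_sub_gaussianReal_le (m : ℝ) (v : ℝ≥0) {c : ℝ} (hc : 0 ≤ c) :
    ∫ y, max (y - m - c * √v) 0 ∂gaussianReal m v ≤ √v / √(2 * π) * rexp (-c ^ 2 / 2) := by
  have hshift : gaussianReal m v = (gaussianReal 0 v).map (· + m) := by
    rw [gaussianReal_map_add_const, zero_add]
  rw [hshift, integral_map (measurable_add_const m).aemeasurable (by fun_prop),
    ← mul_gaussianPDFReal_zero_mul_sqrt]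
  simpa using integral_max_sub_gaussianReal_zero_le v (by positivity : 0 ≤ c * √v)

lemma integrable_max_sub_gaussianReal (m : ℝ) (v : ℝ≥0) (b : ℝ) :
    Integrable (fun y ↦ max (y - b) 0) (gaussianReal m v) :=
  ((memLp_id_gaussianReal 1).integrable le_rfl |>.sub (integrable_const b)).pos_part

end ProbabilityTheory

lemma Matrix.sqrt_dotProduct_mulVec_le {n : Type*} [Fintype n] [DecidableEq n]
    {S : Matrix n n ℝ} {lam : ℝ} (hlam : 0 ≤ lam) (hS : (lam ^ 2 • (1 : Matrix n n ℝ) - S).PosSemidef) {a : n → ℝ}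
    (ha : √(a ⬝ᵥ a) ≤ 1) : √(a ⬝ᵥ S *ᵥ a) ≤ lam := by
  have haa : a ⬝ᵥ a ≤ 1 := by
    simpa using (sqrt_le_one (x := a ⬝ᵥ a)).mp ha
  have h := hS.dotProduct_mulVec_nonneg a
  simp only [star_trivial, sub_mulVec, smul_mulVec, one_mulVec, dotProduct_sub,
    dotProduct_smul, smul_eq_mul] at h
  rw [sqrt_le_left hlam]
  nlinarith

namespace IsGaussianVec

variable {d : ℕ} {ν : Measure (Fin d → ℝ)} {m : Fin d → ℝ} {S : Matrix (Fin d) (Fin d) ℝ}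

lemma integrable_max_dotProduct_sub (hν : IsGaussianVec ν m S) (a : Fin d → ℝ) (b : ℝ) :
    Integrable (fun x ↦ max (a ⬝ᵥ (x - m) - b) 0) ν := by
  have h := integrable_max_sub_gaussianReal (a ⬝ᵥ m) (a ⬝ᵥ S *ᵥ a).toNNReal (a ⬝ᵥ m + b)
  rw [← hν a, integrable_map_measure (by fun_prop) (by fun_prop)] at h
  simpa [Function.comp_def, dotProduct_sub, sub_sub] using h

lemma integral_max_dotProduct_sub_le (hν : IsGaussianVec ν m S) (a : Fin d → ℝ) {c : ℝ}
    (hc : 0 ≤ c) :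
    ∫ x, max (a ⬝ᵥ (x - m) - c * √(a ⬝ᵥ S *ᵥ a)) 0 ∂ν ≤
      √(a ⬝ᵥ S *ᵥ a) / √(2 * π) * rexp (-c ^ 2 / 2) := by
  have h := integral_max_sub_sub_gaussianReal_le (a ⬝ᵥ m) (a ⬝ᵥ S *ᵥ a).toNNReal hc
  have hsqrt : √((a ⬝ᵥ S *ᵥ a).toNNReal : ℝ) = √(a ⬝ᵥ S *ᵥ a) := by
    rw [← Real.coe_sqrt, Real.sqrt]
  rw [hsqrt, ← hν a, integral_map (by fun_prop) (by fun_prop)] at h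
  simpa [dotProduct_sub] using h

end IsGaussianVec

theorem stmt_10_general {d L : ℕ} (lam : ℝ) (hlam : 0 < lam)
    (θb : Fin d → ℝ) (S : Matrix (Fin d) (Fin d) ℝ)
    (hSle : (lam ^ 2 • (1 : Matrix (Fin d) (Fin d) ℝ) - S).PosSemidef)
    (ν : Measure (Fin d → ℝ)) (hν : IsGaussianVec ν θb S)
    (φ : Fin L → Fin d → ℝ) (hφ : ∀ e, Real.sqrt (φ e ⬝ᵥ φ e) ≤ 1)
    (c : ℝ) (hc : 0 < c) :
    (∫ x, ∑ e, max (φ e ⬝ᵥ (x - θb) - c * Real.sqrt (φ e ⬝ᵥ S.mulVec (φ e))) 0 ∂ν) ≤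
      lam * L / Real.sqrt (2 * Real.pi) * Real.exp (-c ^ 2 / 2) := by
  rw [integral_finsetSum _ fun e _ ↦ hν.integrable_max_dotProduct_sub (φ e) _]
  calc ∑ e, ∫ x, max (φ e ⬝ᵥ (x - θb) - c * √(φ e ⬝ᵥ S *ᵥ φ e)) 0 ∂ν
      ≤ ∑ _e : Fin L, lam / √(2 * π) * rexp (-c ^ 2 / 2) := by
        refine sum_le_sum fun e _ ↦ (hν.integral_max_dotProduct_sub_le (φ e) hc.le).trans ?_
        gcongr
        exact sqrt_dotProduct_mulVec_le hlam.le hSle (hφ e)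
    _ = lam * L / √(2 * π) * rexp (-c ^ 2 / 2) := by
        rw [sum_const, card_univ, Fintype.card_fin, nsmul_eq_mul]
        ring

/-- if θ ~ N(θ̄, Σ) with Σ positive definite and Σ ⪯ λ² I, and
‖φ_e‖₂ ≤ 1 for e = 1,…,L, then for any c > 0,
E[ Σ_{e=1}^L max(⟨φ_e, θ − θ̄⟩ − c √(φ_eᵀ Σ φ_e), 0) ] ≤ (λ L/√(2π)) exp(−c²/2). -/
theorem stmt_10 {d L : ℕ} (lam : ℝ) (hlam : 0 < lam)
    (θb : Fin d → ℝ) (S : Matrix (Fin d) (Fin d) ℝ) (hSpd : S.PosDef)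
    (hSle : (lam ^ 2 • (1 : Matrix (Fin d) (Fin d) ℝ) - S).PosSemidef)
    (ν : Measure (Fin d → ℝ)) (hν : IsGaussianVec ν θb S)
    (φ : Fin L → Fin d → ℝ) (hφ : ∀ e, Real.sqrt (φ e ⬝ᵥ φ e) ≤ 1)
    (c : ℝ) (hc : 0 < c) :
    (∫ x, ∑ e, max (φ e ⬝ᵥ (x - θb) - c * Real.sqrt (φ e ⬝ᵥ S.mulVec (φ e))) 0 ∂ν) ≤
      lam * L / Real.sqrt (2 * Real.pi) * Real.exp (-c ^ 2 / 2) :=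
  stmt_10_general lam hlam θb S hSle ν hν φ hφ c hc
end

section
/- Let λ > 0, let θ̄ ∈ ℝ^d, let Σ ∈ ℝ^{d×d} be symmetric positive semidefinite with Σ ⪯ λ² I, and let θ be a random vector with the multivariate Gaussian distribution N(θ̄, Σ). Let E be a finite set, let φ_e ∈ ℝ^d satisfy ‖φ_e‖₂ ≤ 1 for every e ∈ E, let K ≥ 1, and let c > 0. Then E[ max_{A ⊆ E, |A| ≤ K} Σ_{e∈A} ( ⟨φ_e, θ − θ̄⟩ − c √(φ_eᵀ Σ φ_e) ) ] ≤ (2 d K λ / √(2π)) · exp(−c²/(2d)). -/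
/-!
Write `S = ∑ᵢ μᵢ vᵢ vᵢᵀ` in an orthonormal eigenbasis and `αᵢ = ⟨vᵢ, φ_e⟩`, `zᵢ = ⟨vᵢ, θ - θ̄⟩`.
Since `|αᵢ| ≤ 1` and, by Cauchy–Schwarz, `∑ᵢ |αᵢ| √μᵢ ≤ √d · √(φ_eᵀ S φ_e)`, the summand
`⟨φ_e, θ - θ̄⟩ - c √(φ_eᵀ S φ_e)` is bounded by `∑ᵢ (|zᵢ| - (c/√d) √μᵢ)⁺`, a quantity independent of `e`; so the maximum over `A` is
at most `K` times it. Each `zᵢ` is `N(0, μᵢ)`, and for `Z ~ N(0, 1)` and `t ≥ 0` one has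
`E (|Z| - t)⁺ ≤ 2 E[Z; Z > t] = 2 e^{-t²/2} / √(2π)`; with `t = c/√d` and `μᵢ ≤ λ²` this gives
the bound.
-/

open MeasureTheory ProbabilityTheory Matrix Finset

open scoped NNReal
open Real

lemma integrable_mul_exp_neg_sq_div_two : Integrable fun x : ℝ => x * exp (-x ^ 2 / 2) := by
  convert integrable_mul_exp_neg_mul_sq (b := 1 / 2) (by norm_num) using 4
  ring

lemma integral_Ioi_mul_exp_neg_sq_div_two (a : ℝ) :
    ∫ x in Set.Ioi a, x * exp (-x ^ 2 / 2) = exp (-a ^ 2 / 2) := by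
  have hderiv : ∀ x ∈ Set.Ici a,
      HasDerivAt (fun x => -exp (-x ^ 2 / 2)) (x * exp (-x ^ 2 / 2)) x := by
    intro x _
    have h : HasDerivAt (fun x : ℝ => -x ^ 2 / 2) (-x) x :=
      ((hasDerivAt_pow 2 x).neg.div_const 2).congr_deriv (by norm_num; ring)
    exact h.exp.fun_neg.congr_deriv (by ring)
  have hlim : Filter.Tendsto (fun x : ℝ => -exp (-x ^ 2 / 2)) Filter.atTop (nhds 0) := by
    have : Filter.Tendsto (fun x : ℝ => -x ^ 2 / 2) Filter.atTop Filter.atBot :=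
      (Filter.tendsto_neg_atTop_atBot.comp (Filter.tendsto_pow_atTop two_ne_zero)).atBot_div_const
        two_pos
    simpa using (tendsto_exp_atBot.comp this).neg
  rw [integral_Ioi_of_hasDerivAt_of_tendsto' hderiv
    integrable_mul_exp_neg_sq_div_two.integrableOn hlim]
  ring

lemma integral_posPart_abs_sub_gaussianReal_zero_one_le {t : ℝ} (ht : 0 ≤ t) :
    ∫ z, max (|z| - t) 0 ∂(gaussianReal 0 1) ≤ 2 / √(2 * π) * exp (-t ^ 2 / 2) := by
  have hpdf : ∀ z, gaussianPDFReal 0 1 z • max (|z| - t) 0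
      = (√(2 * π))⁻¹ * (max (|z| - t) 0 * exp (-|z| ^ 2 / 2)) := by
    intro z
    simp only [gaussianPDFReal, NNReal.coe_one, mul_one, sub_zero, smul_eq_mul, sq_abs]
    ring
  have htail : ∫ s in Set.Ioi 0, max (s - t) 0 * exp (-s ^ 2 / 2) ≤ exp (-t ^ 2 / 2) := calc
    _ ≤ ∫ s in Set.Ioi 0, (Set.Ioi t).indicator (fun s => s * exp (-s ^ 2 / 2)) s := by
      refine integral_mono_of_nonneg (ae_of_all _ fun s => by positivity)
        (integrable_mul_exp_neg_sq_div_two.indicator measurableSet_Ioi).integrableOn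
        (ae_of_all _ fun s => ?_)
      rcases le_or_gt s t with hst | hst
      · simp [hst]
      · rw [Set.indicator_of_mem (Set.mem_Ioi.mpr hst)]
        exact mul_le_mul_of_nonneg_right (max_le (by linarith) (by linarith)) (exp_pos _).le
    _ = exp (-t ^ 2 / 2) := by
      rw [setIntegral_indicator measurableSet_Ioi, Set.Ioi_inter_Ioi, max_eq_right ht,
        integral_Ioi_mul_exp_neg_sq_div_two]
  rw [integral_gaussianReal_eq_integral_smul one_ne_zero]
  simp_rw [hpdf]
  rw [integral_const_mul, integral_comp_abs (f := fun s => max (s - t) 0 * exp (-s ^ 2 / 2))]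
  calc _ ≤ (√(2 * π))⁻¹ * (2 * exp (-t ^ 2 / 2)) := by gcongr
    _ = _ := by ring

lemma integrable_posPart_abs_sub_gaussianReal (μ : ℝ) (v : ℝ≥0) {a : ℝ} (ha : 0 ≤ a) :
    Integrable (fun y => max (|y| - a) 0) (gaussianReal μ v) := by
  refine ((memLp_id_gaussianReal 1).integrable le_rfl).abs.mono' (by fun_prop)
    (ae_of_all _ fun y => ?_)
  rw [Real.norm_of_nonneg (le_max_right _ _), id]
  exact max_le (by linarith) (abs_nonneg y)

lemma integral_posPart_abs_sub_mul_sqrt_gaussianReal_le (v : ℝ≥0) {t : ℝ} (ht : 0 ≤ t) :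
    ∫ y, max (|y| - t * √v) 0 ∂(gaussianReal 0 v) ≤ 2 * √v / √(2 * π) * exp (-t ^ 2 / 2) := by
  have hmap : (gaussianReal 0 1).map (√v * ·) = gaussianReal 0 v := by
    rw [gaussianReal_map_const_mul, mul_zero, mul_one]
    congr
    simp
  have hscale : ∀ z : ℝ, max (|√v * z| - t * √v) 0 = √v * max (|z| - t) 0 := by
    intro z
    rw [abs_mul, abs_of_nonneg (sqrt_nonneg _), mul_max_of_nonneg _ _ (sqrt_nonneg _), mul_sub,
      mul_zero, mul_comm t]
  rw [← hmap, integral_map (by fun_prop) (by fun_prop)]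
  simp_rw [hscale]
  rw [integral_const_mul]
  calc _ ≤ √v * (2 / √(2 * π) * exp (-t ^ 2 / 2)) := by
        gcongr
        exact integral_posPart_abs_sub_gaussianReal_zero_one_le ht
    _ = _ := by ring

section IsGaussianVec

variable {d : ℕ} {ν : Measure (Fin d → ℝ)} {m : Fin d → ℝ} {S : Matrix (Fin d) (Fin d) ℝ}

lemma IsGaussianVec.map_dotProduct_sub (hν : IsGaussianVec ν m S) (a : Fin d → ℝ) :
    ν.map (fun x => a ⬝ᵥ (x - m)) = gaussianReal 0 (a ⬝ᵥ S *ᵥ a).toNNReal := by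
  have : (fun x => a ⬝ᵥ (x - m)) = (· - a ⬝ᵥ m) ∘ (a ⬝ᵥ ·) := by
    ext x
    simp [dotProduct_sub]
  rw [this, ← Measure.map_map (by fun_prop) (by fun_prop), hν a, gaussianReal_map_sub_const,
    sub_self]

lemma IsGaussianVec.integrable_posPart_abs_dotProduct_sub (hν : IsGaussianVec ν m S)
    (a : Fin d → ℝ) {b : ℝ} (hb : 0 ≤ b) :
    Integrable (fun x => max (|a ⬝ᵥ (x - m)| - b) 0) ν := by
  have h := integrable_posPart_abs_sub_gaussianReal 0 (a ⬝ᵥ S *ᵥ a).toNNReal hb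
  rwa [← hν.map_dotProduct_sub, integrable_map_measure (by fun_prop) (by fun_prop)] at h

lemma IsGaussianVec.integral_posPart_abs_dotProduct_sub_le (hν : IsGaussianVec ν m S)
    (a : Fin d → ℝ) {t : ℝ} (ht : 0 ≤ t) :
    ∫ x, max (|a ⬝ᵥ (x - m)| - t * √(a ⬝ᵥ S *ᵥ a)) 0 ∂ν
      ≤ 2 * √(a ⬝ᵥ S *ᵥ a) / √(2 * π) * exp (-t ^ 2 / 2) := by
  have hsqrt : √((a ⬝ᵥ S *ᵥ a).toNNReal : ℝ) = √(a ⬝ᵥ S *ᵥ a) := by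
    rw [← Real.coe_sqrt, Real.sqrt]
  have h := integral_posPart_abs_sub_mul_sqrt_gaussianReal_le (a ⬝ᵥ S *ᵥ a).toNNReal ht
  rwa [← hν.map_dotProduct_sub, integral_map (by fun_prop) (by fun_prop), hsqrt] at h

end IsGaussianVec

lemma mul_sub_mul_abs_le_posPart {α z b : ℝ} (hα : |α| ≤ 1) :
    α * z - b * |α| ≤ max (|z| - b) 0 := calc
  α * z - b * |α| ≤ |α| * (|z| - b) := by
    nlinarith [le_abs_self (α * z), abs_mul α z]
  _ ≤ max (|z| - b) 0 := by
    rcases le_total 0 (|z| - b) with h | h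
    · exact (mul_le_of_le_one_left h hα).trans (le_max_left _ _)
    · exact (mul_nonpos_of_nonneg_of_nonpos (abs_nonneg α) h).trans (le_max_right _ _)

lemma sum_mul_sub_mul_sqrt_le_sum_posPart {ι : Type*} [Fintype ι] {α μ : ι → ℝ} (z : ι → ℝ)
    (hα : ∀ i, |α i| ≤ 1) (hμ : ∀ i, 0 ≤ μ i) {c : ℝ} (hc : 0 ≤ c) :
    ∑ i, α i * z i - c * √(∑ i, μ i * α i ^ 2)
      ≤ ∑ i, max (|z i| - c / √(Fintype.card ι) * √(μ i)) 0 := by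
  have hCS : ∑ i, |α i| * √(μ i) ≤ √(Fintype.card ι) * √(∑ i, μ i * α i ^ 2) := by
    have h := Real.sum_mul_le_sqrt_mul_sqrt univ (fun _ => 1) (fun i => |α i| * √(μ i))
    simpa [mul_pow, sq_sqrt (hμ _), mul_comm] using h
  have hsum : c / √(Fintype.card ι) * ∑ i, |α i| * √(μ i) ≤ c * √(∑ i, μ i * α i ^ 2) := calc
    _ ≤ c / √(Fintype.card ι) * √(Fintype.card ι) * √(∑ i, μ i * α i ^ 2) := by
      rw [mul_assoc]
      gcongr
    _ ≤ c * √(∑ i, μ i * α i ^ 2) := by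
      rcases eq_or_ne √(Fintype.card ι : ℝ) 0 with h | h
      · rw [h, div_zero, zero_mul, zero_mul]
        positivity
      · rw [div_mul_cancel₀ c h]
  calc _ ≤ ∑ i, α i * z i - c / √(Fintype.card ι) * ∑ i, |α i| * √(μ i) := by
        linarith
    _ = ∑ i, (α i * z i - c / √(Fintype.card ι) * √(μ i) * |α i|) := by
        rw [sum_sub_distrib, mul_sum]
        congr 1
        exact sum_congr rfl fun i _ => by ring
    _ ≤ _ := sum_le_sum fun i _ => mul_sub_mul_abs_le_posPart (hα i)

section OrthonormalBasis

variable {ι n : Type*} [Fintype ι] [Fintype n] (b : OrthonormalBasis ι ℝ (EuclideanSpace ℝ n))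

lemma OrthonormalBasis.dotProduct_eq_sum_mul (x y : n → ℝ) :
    x ⬝ᵥ y = ∑ i, (⇑(b i) ⬝ᵥ x) * (⇑(b i) ⬝ᵥ y) := by
  have h := b.sum_inner_mul_inner (WithLp.toLp 2 x) (WithLp.toLp 2 y)
  simp only [EuclideanSpace.inner_eq_star_dotProduct, star_trivial] at h
  rw [dotProduct_comm x y, ← h]
  exact sum_congr rfl fun i _ => by rw [dotProduct_comm y]

lemma OrthonormalBasis.dotProduct_self (i : ι) : ⇑(b i) ⬝ᵥ ⇑(b i) = 1 := by
  have h := real_inner_self_eq_norm_sq (b i)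
  rw [b.orthonormal.1 i, EuclideanSpace.inner_eq_star_dotProduct] at h
  simpa using h

lemma OrthonormalBasis.sq_dotProduct_le (i : ι) (x : n → ℝ) : (⇑(b i) ⬝ᵥ x) ^ 2 ≤ x ⬝ᵥ x := by
  rw [b.dotProduct_eq_sum_mul x x]
  simpa only [sq] using single_le_sum (fun j _ => mul_self_nonneg (⇑(b j) ⬝ᵥ x)) (mem_univ i)

end OrthonormalBasis

namespace Matrix.IsHermitian

variable {n : Type*} [Fintype n] [DecidableEq n] {S : Matrix n n ℝ} (hS : S.IsHermitian)

lemma eigenvectorBasis_dotProduct_mulVec (i : n) (y : n → ℝ) :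
    ⇑(hS.eigenvectorBasis i) ⬝ᵥ S *ᵥ y = hS.eigenvalues i * (⇑(hS.eigenvectorBasis i) ⬝ᵥ y) := by
  rw [dotProduct_mulVec, ← mulVec_transpose, ← conjTranspose_eq_transpose_of_trivial, hS.eq,
    hS.mulVec_eigenvectorBasis, smul_dotProduct, smul_eq_mul]

lemma dotProduct_mulVec_self_eq_sum (x : n → ℝ) :
    x ⬝ᵥ S *ᵥ x = ∑ i, hS.eigenvalues i * (⇑(hS.eigenvectorBasis i) ⬝ᵥ x) ^ 2 := by
  rw [hS.eigenvectorBasis.dotProduct_eq_sum_mul]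
  simp_rw [eigenvectorBasis_dotProduct_mulVec]
  exact sum_congr rfl fun i _ => by ring

lemma eigenvectorBasis_dotProduct_mulVec_self (i : n) :
    ⇑(hS.eigenvectorBasis i) ⬝ᵥ S *ᵥ ⇑(hS.eigenvectorBasis i) = hS.eigenvalues i := by
  simpa using (hS.eigenvalues_eq i).symm

lemma eigenvalues_le_of_posSemidef_sub {r : ℝ} (h : (r • 1 - S).PosSemidef) (i : n) :
    hS.eigenvalues i ≤ r := by
  have h1 := h.dotProduct_mulVec_nonneg (hS.eigenvectorBasis i)
  rwa [star_trivial, sub_mulVec, smul_mulVec, one_mulVec, dotProduct_sub, dotProduct_smul,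
    OrthonormalBasis.dotProduct_self, eigenvectorBasis_dotProduct_mulVec_self, smul_eq_mul,
    mul_one, sub_nonneg] at h1

end Matrix.IsHermitian

lemma IsGaussianVec.integral_posPart_abs_eigenvectorBasis_dotProduct_sub_le {d : ℕ}
    {ν : Measure (Fin d → ℝ)} {m : Fin d → ℝ} {S : Matrix (Fin d) (Fin d) ℝ}
    (hν : IsGaussianVec ν m S) (hS : S.IsHermitian) {r : ℝ} (hr : 0 ≤ r)
    (hSr : (r ^ 2 • 1 - S).PosSemidef) (i : Fin d) {t : ℝ} (ht : 0 ≤ t) :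
    ∫ x, max (|⇑(hS.eigenvectorBasis i) ⬝ᵥ (x - m)| - t * √(hS.eigenvalues i)) 0 ∂ν
      ≤ 2 * r / √(2 * π) * exp (-t ^ 2 / 2) := by
  have h := hν.integral_posPart_abs_dotProduct_sub_le (hS.eigenvectorBasis i) ht
  rw [hS.eigenvectorBasis_dotProduct_mulVec_self] at h
  refine h.trans ?_
  gcongr
  exact sqrt_le_iff.mpr ⟨hr, hS.eigenvalues_le_of_posSemidef_sub hSr i⟩

lemma Matrix.PosSemidef.dotProduct_sub_mul_sqrt_le_sum {n : Type*} [Fintype n] [DecidableEq n]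
    {S : Matrix n n ℝ} (hS : S.PosSemidef) {φ : n → ℝ} (hφ : φ ⬝ᵥ φ ≤ 1) {c : ℝ} (hc : 0 ≤ c)
    (y : n → ℝ) :
    φ ⬝ᵥ y - c * √(φ ⬝ᵥ S *ᵥ φ) ≤ ∑ i, max (|⇑(hS.isHermitian.eigenvectorBasis i) ⬝ᵥ y|
      - c / √(Fintype.card n) * √(hS.isHermitian.eigenvalues i)) 0 := by
  set b := hS.isHermitian.eigenvectorBasis
  rw [b.dotProduct_eq_sum_mul φ y, hS.isHermitian.dotProduct_mulVec_self_eq_sum]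
  refine sum_mul_sub_mul_sqrt_le_sum_posPart _ (fun i => ?_) hS.eigenvalues_nonneg hc
  exact sq_le_one_iff_abs_le_one _ |>.mp ((b.sq_dotProduct_le i φ).trans hφ)

lemma Finset.sup'_sum_le_mul {E : Type*} {s : Finset (Finset E)} (hs : s.Nonempty) {K : ℕ}
    (hK : ∀ A ∈ s, A.card ≤ K) {f : E → ℝ} {g : ℝ} (hg : 0 ≤ g) (hf : ∀ e, f e ≤ g) :
    s.sup' hs (fun A => ∑ e ∈ A, f e) ≤ K * g :=
  sup'_le hs _ fun A hA => calc
    ∑ e ∈ A, f e ≤ A.card * g := by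
      simpa using sum_le_card_nsmul A f g fun e _ => hf e
    _ ≤ K * g := by
      gcongr
      exact hK A hA

/-- if θ ~ N(θ̄, Σ) with Σ positive semidefinite and Σ ⪯ λ² I, E is a finite
set, ‖φ_e‖₂ ≤ 1 for all e ∈ E, K ≥ 1 and c > 0, then
E[ max_{A ⊆ E, |A| ≤ K} Σ_{e∈A} ( ⟨φ_e, θ − θ̄⟩ − c √(φ_eᵀ Σ φ_e) ) ]
  ≤ (2 d K λ/√(2π)) exp(−c²/(2d)). -/
theorem stmt_11 {d : ℕ} {E : Type*} [Fintype E]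
    (lam : ℝ) (hlam : 0 < lam)
    (θb : Fin d → ℝ) (S : Matrix (Fin d) (Fin d) ℝ) (hSpsd : S.PosSemidef)
    (hSle : (lam ^ 2 • (1 : Matrix (Fin d) (Fin d) ℝ) - S).PosSemidef)
    (ν : Measure (Fin d → ℝ)) (hν : IsGaussianVec ν θb S)
    (φ : E → Fin d → ℝ) (hφ : ∀ e, Real.sqrt (φ e ⬝ᵥ φ e) ≤ 1)
    (K : ℕ) (c : ℝ) (hc : 0 < c) :
    (∫ x, ((Finset.univ.filter fun A : Finset E => A.card ≤ K).sup'
          ⟨∅, by simp⟩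
          fun A => ∑ e ∈ A,
            (φ e ⬝ᵥ (x - θb) - c * Real.sqrt (φ e ⬝ᵥ S.mulVec (φ e)))) ∂ν) ≤
      2 * d * K * lam / Real.sqrt (2 * Real.pi) * Real.exp (-c ^ 2 / (2 * d)) := by
  set hS := hSpsd.isHermitian
  set t := c / √d
  let h : Fin d → (Fin d → ℝ) → ℝ := fun i x =>
    max (|⇑(hS.eigenvectorBasis i) ⬝ᵥ (x - θb)| - t * √(hS.eigenvalues i)) 0
  have ht : 0 ≤ t := by positivity
  have hexp : -t ^ 2 / 2 = -c ^ 2 / (2 * d) := by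
    rw [div_pow, sq_sqrt d.cast_nonneg]
    ring
  have hint : ∀ i, Integrable (h i) ν := fun i =>
    hν.integrable_posPart_abs_dotProduct_sub _ (by positivity)
  have hbound : ∀ i, ∫ x, h i x ∂ν ≤ 2 * lam / √(2 * π) * exp (-c ^ 2 / (2 * d)) := fun i =>
    hexp ▸ hν.integral_posPart_abs_eigenvectorBasis_dotProduct_sub_le hS hlam.le hSle i ht
  calc _ ≤ ∫ x, (K : ℝ) * ∑ i, h i x ∂ν := by
        refine integral_mono_of_nonneg (ae_of_all _ fun x => ?_)
          ((integrable_finsetSum _ fun i _ => hint i).const_mul _) (ae_of_all _ fun x => ?_)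
        · exact le_sup'_of_le _ (b := ∅) (by simp) (by simp)
        · refine sup'_sum_le_mul _ (fun A hA => (mem_filter.1 hA).2)
            (sum_nonneg fun i _ => le_max_right _ _) fun e => ?_
          have he := hSpsd.dotProduct_sub_mul_sqrt_le_sum (sqrt_le_one.mp (hφ e)) hc.le (x - θb)
          rwa [Fintype.card_fin] at he
    _ = K * ∑ i, ∫ x, h i x ∂ν := by
        rw [integral_const_mul, integral_finsetSum _ fun i _ => hint i]
    _ ≤ K * ∑ _i : Fin d, 2 * lam / √(2 * π) * exp (-c ^ 2 / (2 * d)) := by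
        gcongr with i
        exact hbound i
    _ = _ := by
        rw [sum_const, card_univ, Fintype.card_fin, nsmul_eq_mul]
        ring
end
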